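/- arXiv:math/0306167 — 6 statements merged into one kernel-verified Lean document; each statement's English description precedes it below -/
import Mathlib

section
/- For a Euclidean triangle with side lengths x_i, x_j, x_k (satisfying strict triangle inequalities), area A, and inner angle θ_i opposite side x_i, the partial derivative of θ_i with respect to x_i equals x_i/(2A). -/
/-!
By the law of cosines `θ_i = arccos u` with `u = (x_j² + x_k² - x_i²)/(2 x_j x_k)`, and
`du/dx_i = -x_i/(x_j x_k)`. The Heron product `16 A²` equals `(2 x_j x_k)² - (x_j² + x_k² - x_i²)²`,
so `√(1 - u²) = 4A/(2 x_j x_k)`, and the chain rule for `arccos` gives `x_i/(2A)`.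
-/

open Real

section LawOfCosines

variable {a b c : ℝ}

theorem heron_product_eq_sq_sub_sq (a b c : ℝ) :
    (a + b + c) * (-a + b + c) * (a - b + c) * (a + b - c) =
      (2 * b * c) ^ 2 - (b ^ 2 + c ^ 2 - a ^ 2) ^ 2 := by
  ring

theorem heron_product_pos (h1 : a + b > c) (h2 : b + c > a) (h3 : c + a > b) :
    0 < (a + b + c) * (-a + b + c) * (a - b + c) * (a + b - c) := by
  exact mul_pos (mul_pos (mul_pos (by linarith) (by linarith)) (by linarith)) (by linarith)

theorem sqrt_one_sub_sq_cos_lawOfCosines (hb : 0 < b) (hc : 0 < c) :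
    √(1 - ((b ^ 2 + c ^ 2 - a ^ 2) / (2 * b * c)) ^ 2) =
      √((a + b + c) * (-a + b + c) * (a - b + c) * (a + b - c)) / (2 * b * c) := by
  have hbc : 0 < 2 * b * c := by positivity
  have h : 1 - ((b ^ 2 + c ^ 2 - a ^ 2) / (2 * b * c)) ^ 2 =
      (a + b + c) * (-a + b + c) * (a - b + c) * (a + b - c) / (2 * b * c) ^ 2 := by
    rw [heron_product_eq_sq_sub_sq]
    field_simp
  rw [h, sqrt_div' _ (sq_nonneg _), sqrt_sq hbc.le]

theorem hasDerivAt_arccos_lawOfCosines (h1 : a + b > c) (h2 : b + c > a) (h3 : c + a > b) :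
    HasDerivAt (fun x : ℝ => arccos ((b ^ 2 + c ^ 2 - x ^ 2) / (2 * b * c)))
      (2 * a / √((a + b + c) * (-a + b + c) * (a - b + c) * (a + b - c))) a := by
  have hb : 0 < b := by linarith
  have hc : 0 < c := by linarith
  have hP := sqrt_pos.mpr (heron_product_pos h1 h2 h3)
  set u := (b ^ 2 + c ^ 2 - a ^ 2) / (2 * b * c)
  have hu : 0 < √(1 - u ^ 2) := by
    rw [sqrt_one_sub_sq_cos_lawOfCosines hb hc]
    exact div_pos hP (by positivity)
  have hu_ne_neg_one : u ≠ -1 := by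
    rintro h; rw [h] at hu; norm_num at hu
  have hu_ne_one : u ≠ 1 := by
    rintro h; rw [h] at hu; norm_num at hu
  have hinner : HasDerivAt (fun x : ℝ => (b ^ 2 + c ^ 2 - x ^ 2) / (2 * b * c))
      (-(2 * a) / (2 * b * c)) a := by
    simpa using ((hasDerivAt_pow 2 a).const_sub (b ^ 2 + c ^ 2)).div_const (2 * b * c)
  refine ((hasDerivAt_arccos hu_ne_neg_one hu_ne_one).comp a hinner).congr_deriv ?_
  rw [sqrt_one_sub_sq_cos_lawOfCosines hb hc]
  field_simp

end LawOfCosines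

theorem deriv_angle_wrt_opposite_side_general (xi xj xk : ℝ)
    (h1 : xi + xj > xk) (h2 : xj + xk > xi) (h3 : xk + xi > xj) :
    HasDerivAt (fun x : ℝ => Real.arccos ((xj ^ 2 + xk ^ 2 - x ^ 2) / (2 * xj * xk)))
      (xi / (2 * ((1 / 4) * Real.sqrt ((xi + xj + xk) * (-xi + xj + xk) *
        (xi - xj + xk) * (xi + xj - xk))))) xi := by
  convert hasDerivAt_arccos_lawOfCosines h1 h2 h3 using 1
  ring

/-- For a Euclidean triangle with side lengths `xi, xj, xk` (strict
triangle inequalities), area `A` by Heron's formula, and inner angle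
`θ_i = arccos((xj² + xk² - xi²)/(2 xj xk))` opposite side `xi`, the partial
derivative of `θ_i` with respect to `xi` equals `xi/(2A)`. -/
theorem deriv_angle_wrt_opposite_side (xi xj xk : ℝ)
    (hxi : 0 < xi) (hxj : 0 < xj) (hxk : 0 < xk)
    (h1 : xi + xj > xk) (h2 : xj + xk > xi) (h3 : xk + xi > xj) :
    HasDerivAt (fun x : ℝ => Real.arccos ((xj ^ 2 + xk ^ 2 - x ^ 2) / (2 * xj * xk)))
      (xi / (2 * ((1 / 4) * Real.sqrt ((xi + xj + xk) * (-xi + xj + xk) *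
        (xi - xj + xk) * (xi + xj - xk))))) xi :=
  deriv_angle_wrt_opposite_side_general xi xj xk h1 h2 h3
end

section
/- Let a_rr = x_r² and a_rs = -x_r x_s cos(θ_t) for {r,s,t}={i,j,k}, where x_i, x_j, x_k are the side lengths and θ_i, θ_j, θ_k the opposite angles of a Euclidean triangle. Then the 3×3 matrix [a_rs] is symmetric, positive semidefinite, and has determinant zero. -/
/-!
Writing `q r = x r ^ 2`, the law of cosines turns the off-diagonal entries into
`(q t - q r - q s) / 2`: the matrix is the Gram matrix of the side vectors `v₀ + v₁ + v₂ = 0`.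
Hence every row sums to zero and the determinant vanishes. Completing the square in `y₀` gives
`4 q₀ · yᵀ A y = (2 q₀ y₀ + (q₂ - q₀ - q₁) y₁ + (q₁ - q₀ - q₂) y₂)² + H · (y₁ - y₂)²`,
where `H = 2 (q₀ q₁ + q₁ q₂ + q₂ q₀) - (q₀² + q₁² + q₂²)` is sixteen times the squared area
(Heron's formula), hence positive for a nondegenerate triangle.
-/

open Matrix Real

lemma Fin.three_neg_one : (-1 : Fin 3) = 2 := rfl

lemma Fin.three_neg_two : (-2 : Fin 3) = 1 := rfl

lemma Fin.three_offDiag_cases {r s : Fin 3} (h : r ≠ s) :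
    (r = -(r + s) + 1 ∧ s = -(r + s) + 2) ∨ (r = -(r + s) + 2 ∧ s = -(r + s) + 1) := by
  revert r s; decide

lemma abs_sub_lt_of_triangle {x : Fin 3 → ℝ} (htri : ∀ r : Fin 3, x (r + 1) + x (r + 2) > x r)
    (t : Fin 3) : |x (t + 1) - x (t + 2)| < x t := by
  have h₁ := htri (t + 1)
  have h₂ := htri (t + 2)
  rw [show t + 1 + 1 = t + 2 by fin_cases t <;> rfl, show t + 1 + 2 = t by fin_cases t <;> rfl] at h₁
  rw [show t + 2 + 1 = t by fin_cases t <;> rfl, show t + 2 + 2 = t + 1 by fin_cases t <;> rfl] at h₂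
  exact abs_sub_lt_iff.mpr ⟨by linarith, by linarith⟩

lemma cos_arccos_lawOfCosines {a b c : ℝ} (hb : 0 < b) (hc : 0 < c)
    (hlow : |b - c| ≤ a) (hup : a ≤ b + c) :
    cos (arccos ((b ^ 2 + c ^ 2 - a ^ 2) / (2 * b * c))) = (b ^ 2 + c ^ 2 - a ^ 2) / (2 * b * c) := by
  have hsq_low : (b - c) ^ 2 ≤ a ^ 2 := by
    rw [← sq_abs (b - c)]; exact pow_le_pow_left₀ (abs_nonneg _) hlow 2
  have hsq_up : a ^ 2 ≤ (b + c) ^ 2 := pow_le_pow_left₀ ((abs_nonneg _).trans hlow) hup 2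
  apply cos_arccos
  · rw [le_div_iff₀ (by positivity)]; nlinarith
  · rw [div_le_one (by positivity)]; nlinarith

/-- `q` are the squared side lengths; the off-diagonal entry is `⟪v_r, v_s⟫` for side vectors
with `v_r + v_s + v_t = 0`. -/
noncomputable def triangleGram (q : Fin 3 → ℝ) : Matrix (Fin 3) (Fin 3) ℝ :=
  of fun r s => if r = s then q r else (q (-(r + s)) - q r - q s) / 2

def heronForm (q : Fin 3 → ℝ) : ℝ :=
  2 * (q 0 * q 1 + q 1 * q 2 + q 2 * q 0) - (q 0 ^ 2 + q 1 ^ 2 + q 2 ^ 2)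

lemma triangleGram_isSymm (q : Fin 3 → ℝ) : (triangleGram q).IsSymm := by
  ext r s
  simp only [triangleGram, transpose_apply, of_apply, eq_comm (a := s), add_comm s r]
  split_ifs with h
  · rw [h]
  · ring

lemma triangleGram_mulVec_one (q : Fin 3 → ℝ) : triangleGram q *ᵥ 1 = 0 := by
  ext r
  fin_cases r <;>
    simp only [mulVec, dotProduct, triangleGram, of_apply, Fin.sum_univ_three, Fin.isValue,
      Fin.zero_eta, Fin.mk_one, Fin.reduceFinMk, Fin.reduceEq, Fin.reduceAdd, neg_add_rev, neg_zero,
      add_zero, zero_add, Fin.three_neg_one, Fin.three_neg_two, Pi.one_apply, Pi.zero_apply, mul_one,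
      zero_ne_one, one_ne_zero, ↓reduceIte] <;>
    ring

lemma det_triangleGram (q : Fin 3 → ℝ) : (triangleGram q).det = 0 :=
  exists_mulVec_eq_zero_iff.mp ⟨1, one_ne_zero, triangleGram_mulVec_one q⟩

lemma four_mul_dotProduct_triangleGram (q y : Fin 3 → ℝ) :
    4 * q 0 * (y ⬝ᵥ (triangleGram q *ᵥ y)) =
      (2 * q 0 * y 0 + (q 2 - q 0 - q 1) * y 1 + (q 1 - q 0 - q 2) * y 2) ^ 2
        + heronForm q * (y 1 - y 2) ^ 2 := by
  simp only [dotProduct, mulVec, triangleGram, heronForm, of_apply, ite_mul, Fin.sum_univ_three,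
    Fin.isValue, Fin.reduceEq, Fin.reduceAdd, neg_add_rev, neg_zero, add_zero, zero_add,
    Fin.three_neg_one, Fin.three_neg_two, zero_ne_one, one_ne_zero, ↓reduceIte]
  ring

lemma triangleGram_posSemidef {q : Fin 3 → ℝ} (hq : 0 < q 0) (hH : 0 ≤ heronForm q) :
    (triangleGram q).PosSemidef := by
  refine .of_dotProduct_mulVec_nonneg (isHermitian_iff_isSymm.mpr (triangleGram_isSymm q))
    fun y => ?_
  rw [star_trivial]
  refine nonneg_of_mul_nonneg_right ?_ (by positivity : (0 : ℝ) < 4 * q 0)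
  rw [four_mul_dotProduct_triangleGram]
  positivity

lemma heronForm_sq (x : Fin 3 → ℝ) :
    heronForm (x ^ 2) =
      (x 0 + x 1 + x 2) * (-x 0 + x 1 + x 2) * (x 0 - x 1 + x 2) * (x 0 + x 1 - x 2) := by
  simp only [heronForm, Pi.pow_apply]; ring

lemma heronForm_sq_pos {x : Fin 3 → ℝ} (htri : ∀ r : Fin 3, x (r + 1) + x (r + 2) > x r) :
    0 < heronForm (x ^ 2) := by
  have h₀ := htri 0
  have h₁ := htri 1
  have h₂ := htri 2
  simp only [Fin.reduceAdd] at h₀ h₁ h₂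
  rw [heronForm_sq]
  refine mul_pos (mul_pos (mul_pos ?_ ?_) ?_) ?_ <;> linarith

lemma eq_triangleGram_sq {a : Matrix (Fin 3) (Fin 3) ℝ} {x c : Fin 3 → ℝ}
    (hc : ∀ t, x (t + 1) * x (t + 2) * c t = (x (t + 1) ^ 2 + x (t + 2) ^ 2 - x t ^ 2) / 2)
    (ha : ∀ r s, a r s = if r = s then x r ^ 2 else -(x r * x s * c (-(r + s)))) :
    a = triangleGram (x ^ 2) := by
  ext r s
  rw [ha, triangleGram, of_apply]
  split_ifs with hrs
  · rfl
  · have h := hc (-(r + s))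
    simp only [Pi.pow_apply]
    rcases Fin.three_offDiag_cases hrs with ⟨hr, hs⟩ | ⟨hr, hs⟩ <;>
      rw [← hr, ← hs] at h <;> linear_combination -h

theorem angle_matrix_posSemidef_general (x : Fin 3 → ℝ)
    (htri : ∀ r : Fin 3, x (r + 1) + x (r + 2) > x r)
    (θ : Fin 3 → ℝ)
    (hθ : ∀ r, θ r = Real.arccos
      ((x (r + 1) ^ 2 + x (r + 2) ^ 2 - x r ^ 2) / (2 * x (r + 1) * x (r + 2))))
    (a : Matrix (Fin 3) (Fin 3) ℝ)
    (ha : ∀ r s, a r s = if r = s then x r ^ 2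
      else -(x r * x s * Real.cos (θ (-(r + s))))) :
    a.IsSymm ∧ a.PosSemidef ∧ a.det = 0 := by
  have hpos t : 0 < x t := (abs_nonneg _).trans_lt (abs_sub_lt_of_triangle htri t)
  have hcos t : x (t + 1) * x (t + 2) * cos (θ t)
      = (x (t + 1) ^ 2 + x (t + 2) ^ 2 - x t ^ 2) / 2 := by
    rw [hθ t, cos_arccos_lawOfCosines (hpos _) (hpos _) (abs_sub_lt_of_triangle htri t).le
      (htri t).le]
    have := (hpos (t + 1)).ne'
    have := (hpos (t + 2)).ne'
    field_simp
  obtain rfl := eq_triangleGram_sq hcos ha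
  exact ⟨triangleGram_isSymm _, triangleGram_posSemidef (pow_pos (hpos 0) 2)
    (heronForm_sq_pos htri).le, det_triangleGram _⟩

/-- With `a_rr = x_r²` and `a_rs = -x_r x_s cos θ_t` for
`{r,s,t} = {i,j,k}`, where `x` are the side lengths and `θ` the opposite angles
(law of cosines) of a Euclidean triangle, the 3×3 matrix `[a_rs]` is symmetric,
positive semidefinite and has determinant zero. -/
theorem angle_matrix_posSemidef (x : Fin 3 → ℝ) (hx : ∀ r, 0 < x r)
    (htri : ∀ r : Fin 3, x (r + 1) + x (r + 2) > x r)
    (θ : Fin 3 → ℝ)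
    (hθ : ∀ r, θ r = Real.arccos
      ((x (r + 1) ^ 2 + x (r + 2) ^ 2 - x r ^ 2) / (2 * x (r + 1) * x (r + 2))))
    (a : Matrix (Fin 3) (Fin 3) ℝ)
    (ha : ∀ r s, a r s = if r = s then x r ^ 2
      else -(x r * x s * Real.cos (θ (-(r + s))))) :
    a.IsSymm ∧ a.PosSemidef ∧ a.det = 0 :=
  angle_matrix_posSemidef_general x htri θ hθ a ha
end

section
/- The null space of the matrix [a_rs] (with a_rr = x_r², a_rs = -x_r x_s cos(θ_t)) is exactly the one-dimensional subspace {(t,t,t) : t ∈ ℝ}; equivalently, the matrix has rank 2. -/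
/-!
By the law of cosines `a_rs = -(x_r ^ 2 + x_s ^ 2 - x_t ^ 2) / 2` off the diagonal, so `[a_rs]` is
the Gram matrix of the three edge vectors of the triangle taken head to tail. These sum to zero,
so `(1, 1, 1)` lies in the kernel, and they span a plane: the leading `2 × 2` minor is `4 · area²`,
positive by Heron's formula.
-/

open Real Matrix

lemma mul_mul_cos_arccos_of_triangle {a b c : ℝ} (ha : 0 < a) (hb : 0 < b)
    (hab : c ≤ a + b) (hbc : a ≤ b + c) (hca : b ≤ c + a) :
    a * b * cos (arccos ((a ^ 2 + b ^ 2 - c ^ 2) / (2 * a * b))) = (a ^ 2 + b ^ 2 - c ^ 2) / 2 := by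
  have hpos : 0 < 2 * a * b := by positivity
  rw [cos_arccos]
  · field_simp
  · rw [le_div_iff₀ hpos]; nlinarith
  · rw [div_le_one hpos]; nlinarith

noncomputable def edgeGramMatrix (p q r : ℝ) : Matrix (Fin 3) (Fin 3) ℝ :=
  !![p ^ 2, -((p ^ 2 + q ^ 2 - r ^ 2) / 2), -((r ^ 2 + p ^ 2 - q ^ 2) / 2);
     -((p ^ 2 + q ^ 2 - r ^ 2) / 2), q ^ 2, -((q ^ 2 + r ^ 2 - p ^ 2) / 2);
     -((r ^ 2 + p ^ 2 - q ^ 2) / 2), -((q ^ 2 + r ^ 2 - p ^ 2) / 2), r ^ 2]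

lemma edgeGramMatrix_mulVec_const (p q r t : ℝ) :
    edgeGramMatrix p q r *ᵥ (fun _ => t) = 0 := by
  ext i
  fin_cases i <;>
    simp only [mulVec, dotProduct, edgeGramMatrix, Fin.zero_eta, Fin.mk_one, Fin.reduceFinMk,
      Fin.isValue, of_apply, cons_val', cons_val_fin_one, cons_val_zero, cons_val_one, cons_val,
      Fin.sum_univ_three, Pi.zero_apply] <;>
    ring

lemma edgeGramMatrix_mulVec_eq_zero_iff {p q r : ℝ}
    (heron : (p + q + r) * (-p + q + r) * (p - q + r) * (p + q - r) ≠ 0) (v : Fin 3 → ℝ) :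
    edgeGramMatrix p q r *ᵥ v = 0 ↔ ∃ t, v = fun _ => t := by
  refine ⟨fun hv => ?_, fun ⟨t, hv⟩ => hv ▸ edgeGramMatrix_mulVec_const p q r t⟩
  have row0 := congrFun hv 0
  have row1 := congrFun hv 1
  simp only [mulVec, dotProduct, edgeGramMatrix, Fin.isValue, of_apply, cons_val', cons_val_fin_one,
    cons_val_zero, Fin.sum_univ_three, cons_val_one, cons_val, Pi.zero_apply] at row0 row1
  have h02 : v 0 = v 2 := by
    have : (p + q + r) * (-p + q + r) * (p - q + r) * (p + q - r) * (v 0 - v 2) = 0 := by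
      linear_combination (4 * q ^ 2) * row0 + (2 * (p ^ 2 + q ^ 2 - r ^ 2)) * row1
    have := (mul_eq_zero.mp this).resolve_left heron
    linarith
  have h12 : v 1 = v 2 := by
    have : (p + q + r) * (-p + q + r) * (p - q + r) * (p + q - r) * (v 1 - v 2) = 0 := by
      linear_combination (2 * (p ^ 2 + q ^ 2 - r ^ 2)) * row0 + (4 * p ^ 2) * row1
    have := (mul_eq_zero.mp this).resolve_left heron
    linarith
  exact ⟨v 2, by ext i; fin_cases i <;> simp [h02, h12]⟩

theorem Matrix.rank_eq_card_sub_one_of_mulVec_eq_zero_iff {m K : Type*} [Fintype m]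
    [Nonempty m] [Field K] (A : Matrix m m K)
    (hA : ∀ v, A *ᵥ v = 0 ↔ ∃ t, v = fun _ => t) :
    A.rank = Fintype.card m - 1 := by
  have hker : LinearMap.ker A.mulVecLin = K ∙ (fun _ => 1) := by
    ext v
    simp only [LinearMap.mem_ker, mulVecLin_apply, hA, Submodule.mem_span_singleton]
    exact ⟨fun ⟨t, ht⟩ => ⟨t, by ext; simp [ht]⟩, fun ⟨t, ht⟩ => ⟨t, by ext; simp [← ht]⟩⟩
  have hker_dim : Module.finrank K (LinearMap.ker A.mulVecLin) = 1 := by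
    rw [hker]
    exact finrank_span_singleton (Function.ne_iff.mpr ⟨Classical.arbitrary m, one_ne_zero⟩)
  have := LinearMap.finrank_range_add_finrank_ker A.mulVecLin
  rw [hker_dim, Module.finrank_fintype_fun_eq_card] at this
  rw [Matrix.rank]
  omega

theorem angle_matrix_kernel_diagonal_general (x : Fin 3 → ℝ)
    (htri : ∀ r : Fin 3, x (r + 1) + x (r + 2) > x r)
    (θ : Fin 3 → ℝ)
    (hθ : ∀ r, θ r = Real.arccos
      ((x (r + 1) ^ 2 + x (r + 2) ^ 2 - x r ^ 2) / (2 * x (r + 1) * x (r + 2))))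
    (a : Matrix (Fin 3) (Fin 3) ℝ)
    (ha : ∀ r s, a r s = if r = s then x r ^ 2
      else -(x r * x s * Real.cos (θ (-(r + s))))) :
    (∀ v : Fin 3 → ℝ, a.mulVec v = 0 ↔ ∃ t : ℝ, v = fun _ => t) ∧ a.rank = 2 := by
  have t0 : x 1 + x 2 > x 0 := htri 0
  have t1 : x 2 + x 0 > x 1 := htri 1
  have t2 : x 0 + x 1 > x 2 := htri 2
  have h0 : 0 < x 0 := by linarith
  have h1 : 0 < x 1 := by linarith
  have h2 : 0 < x 2 := by linarith
  have c0 : x 1 * x 2 * cos (θ 0) = (x 1 ^ 2 + x 2 ^ 2 - x 0 ^ 2) / 2 := by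
    rw [hθ]; exact mul_mul_cos_arccos_of_triangle h1 h2 t0.le (by linarith) (by linarith)
  have c1 : x 2 * x 0 * cos (θ 1) = (x 2 ^ 2 + x 0 ^ 2 - x 1 ^ 2) / 2 := by
    rw [hθ]; exact mul_mul_cos_arccos_of_triangle h2 h0 t1.le (by linarith) (by linarith)
  have c2 : x 0 * x 1 * cos (θ 2) = (x 0 ^ 2 + x 1 ^ 2 - x 2 ^ 2) / 2 := by
    rw [hθ]; exact mul_mul_cos_arccos_of_triangle h0 h1 t2.le (by linarith) (by linarith)
  obtain rfl : a = edgeGramMatrix (x 0) (x 1) (x 2) := by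
    ext r s
    fin_cases r <;> fin_cases s <;>
      simp only [ha, edgeGramMatrix, Fin.zero_eta, Fin.mk_one, Fin.reduceFinMk, Fin.isValue,
        Fin.reduceEq, ↓reduceIte, zero_add, add_zero, Fin.reduceAdd, neg_zero,
        show (-1 : Fin 3) = 2 from rfl, show (-2 : Fin 3) = 1 from rfl, of_apply, cons_val',
        cons_val, cons_val_zero, cons_val_one, cons_val_fin_one, neg_inj] <;>
      linarith
  have heron : (x 0 + x 1 + x 2) * (-x 0 + x 1 + x 2) * (x 0 - x 1 + x 2) * (x 0 + x 1 - x 2) ≠ 0 := by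
    have : 0 < -x 0 + x 1 + x 2 := by linarith
    have : 0 < x 0 - x 1 + x 2 := by linarith
    have : 0 < x 0 + x 1 - x 2 := by linarith
    positivity
  have hker := edgeGramMatrix_mulVec_eq_zero_iff heron
  exact ⟨hker, by simpa using rank_eq_card_sub_one_of_mulVec_eq_zero_iff _ hker⟩

/-- The null space of the matrix `[a_rs]` (with `a_rr = x_r²`,
`a_rs = -x_r x_s cos θ_t`) is exactly `{(t,t,t) : t ∈ ℝ}`; equivalently the
matrix has rank 2. -/
theorem angle_matrix_kernel_diagonal (x : Fin 3 → ℝ) (hx : ∀ r, 0 < x r)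
    (htri : ∀ r : Fin 3, x (r + 1) + x (r + 2) > x r)
    (θ : Fin 3 → ℝ)
    (hθ : ∀ r, θ r = Real.arccos
      ((x (r + 1) ^ 2 + x (r + 2) ^ 2 - x r ^ 2) / (2 * x (r + 1) * x (r + 2))))
    (a : Matrix (Fin 3) (Fin 3) ℝ)
    (ha : ∀ r s, a r s = if r = s then x r ^ 2
      else -(x r * x s * Real.cos (θ (-(r + s))))) :
    (∀ v : Fin 3 → ℝ, a.mulVec v = 0 ↔ ∃ t : ℝ, v = fun _ => t) ∧ a.rank = 2 :=
  angle_matrix_kernel_diagonal_general x htri θ hθ a ha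
end

section
/- The set {d² : d is a PL metric on the edge set of a single triangle}, i.e., {(x_i², x_j², x_k²) : x_i, x_j, x_k > 0 satisfy strict triangle inequalities}, is a convex subset of ℝ³. -/
/-! For weights `a, b ≥ 0` with `a + b = 1`, the square root of the convex combination
`a • x² + b • y²` of two squared metrics is `z = √(a x² + b y²)`, the weighted Euclidean norm
of `(x, y)`. Each edge of `z` is positive, and the triangle inequality for `z` follows from
that of `x` and `y` by monotonicity of the norm followed by Minkowski's inequality. -/

namespace Real

variable {a b : ℝ}

lemma weighted_inner_le_sqrt_mul_sqrt (ha : 0 ≤ a) (hb : 0 ≤ b) (p q r s : ℝ) :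
    a * (p * q) + b * (r * s) ≤ √(a * p ^ 2 + b * r ^ 2) * √(a * q ^ 2 + b * s ^ 2) := by
  rw [← sqrt_mul (by positivity)]
  apply le_sqrt_of_sq_le
  nlinarith [mul_nonneg (mul_nonneg ha hb) (sq_nonneg (p * s - q * r))]

lemma sqrt_weighted_sq_add_le (ha : 0 ≤ a) (hb : 0 ≤ b) (p q r s : ℝ) :
    √(a * (p + q) ^ 2 + b * (r + s) ^ 2) ≤
      √(a * p ^ 2 + b * r ^ 2) + √(a * q ^ 2 + b * s ^ 2) := by
  rw [sqrt_le_left (by positivity), add_sq (√_), sq_sqrt (by positivity), sq_sqrt (by positivity)]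
  nlinarith [weighted_inner_le_sqrt_mul_sqrt ha hb p q r s]

lemma sqrt_weighted_sq_lt_of_lt (ha : 0 ≤ a) (hb : 0 ≤ b) (hab : a + b = 1)
    {p q r s : ℝ} (hp : 0 < p) (hpq : p < q) (hr : 0 < r) (hrs : r < s) :
    √(a * p ^ 2 + b * r ^ 2) < √(a * q ^ 2 + b * s ^ 2) := by
  have hpos : 0 < a * (q ^ 2 - p ^ 2) + b * (s ^ 2 - r ^ 2) :=
    convex_Ioi 0 (sub_pos.2 (pow_lt_pow_left₀ hpq hp.le two_ne_zero))
      (sub_pos.2 (pow_lt_pow_left₀ hrs hr.le two_ne_zero)) ha hb hab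
  exact sqrt_lt_sqrt (by positivity) (by linarith)

end Real

/-- The set of squared PL metrics on a single triangle,
`{(x_i², x_j², x_k²) : x_i, x_j, x_k > 0` satisfying strict triangle
inequalities `}`, is convex in ℝ³. -/
theorem squared_PL_metrics_convex :
    Convex ℝ {p : Fin 3 → ℝ | ∃ x : Fin 3 → ℝ, (∀ r, 0 < x r) ∧
      (∀ r : Fin 3, x (r + 1) + x (r + 2) > x r) ∧ p = fun r => x r ^ 2} := by
  rintro _ ⟨x, hx, hxt, rfl⟩ _ ⟨y, hy, hyt, rfl⟩ a b ha hb hab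
  refine ⟨fun r => √(a * x r ^ 2 + b * y r ^ 2), fun r => ?_, fun r => ?_, ?_⟩
  · exact Real.sqrt_pos.2 <| convex_Ioi (0 : ℝ) (pow_pos (hx r) 2) (pow_pos (hy r) 2) ha hb hab
  · calc √(a * x r ^ 2 + b * y r ^ 2)
        < √(a * (x (r + 1) + x (r + 2)) ^ 2 + b * (y (r + 1) + y (r + 2)) ^ 2) :=
          Real.sqrt_weighted_sq_lt_of_lt ha hb hab (hx r) (hxt r) (hy r) (hyt r)
      _ ≤ _ := Real.sqrt_weighted_sq_add_le ha hb _ _ _ _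
  · funext r
    simp only [Pi.add_apply, Pi.smul_apply, smul_eq_mul]
    rw [Real.sq_sqrt (by positivity)]
end

section
/- Fix a nondegenerate Euclidean triangle with fixed edge data d_i, d_j, d_k > 0. For conformal factors (u_i, u_j, u_k) with edge lengths x_r = d_r u_s u_t ({r,s,t}={i,j,k}) satisfying strict triangle inequalities, the matrix [∂θ_r/∂u_s · u_s] equals -(1/(2A))·[a_rs], where a_rr = x_r², a_rs = -x_r x_s cos θ_t, A is the triangle's area, and θ_r is the angle opposite x_r. In particular the matrix [∂θ_r/∂u_s · u_s] is symmetric. -/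
/-!
Along `u_s ↦ u_s + t u_s` every edge length `x_q` with `q ≠ s` grows like `(1 + t) x_q` while
`x_s` stays fixed, so `u_s ∂x_q/∂u_s` is `x_q` for `q ≠ s` and `0` for `q = s`. Feeding this into
the classical differential of an angle, `dα = (a / 2A) (da - cos γ db - cos β dc)`, and using the
projection formula `a = b cos γ + c cos β` collapses each entry to `-(1/2A) a_rs`, visibly
symmetric in `r, s`.
-/

open Real ContinuousLinearMap

/-- The cosine of the angle opposite the side `a` of a triangle with sides `a, b, c`. -/
noncomputable def cosRule (a b c : ℝ) : ℝ := (b ^ 2 + c ^ 2 - a ^ 2) / (2 * b * c)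

/-- Heron's product, equal to `16 · area²` for a triangle with sides `a, b, c`. -/
def heron (a b c : ℝ) : ℝ := (a + b + c) * (-a + b + c) * (a - b + c) * (a + b - c)

lemma heron_pos {a b c : ℝ} (ha : a < b + c) (hb : b < c + a) (hc : c < a + b) :
    0 < heron a b c := by
  unfold heron
  apply mul_pos (mul_pos (mul_pos _ _) _) _ <;> linarith

lemma heron_rotate (l : Fin 3 → ℝ) (r : Fin 3) :
    heron (l r) (l (r + 1)) (l (r + 2)) = heron (l 0) (l 1) (l 2) := by
  fin_cases r <;>
    simp only [heron, Fin.zero_eta, Fin.mk_one, Fin.reduceFinMk, Fin.reduceAdd] <;> ring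

lemma heron_rotate_pos (l : Fin 3 → ℝ) (htri : ∀ r, l (r + 1) + l (r + 2) > l r) (r : Fin 3) :
    0 < heron (l r) (l (r + 1)) (l (r + 2)) := by
  have h0 := htri 0; have h1 := htri 1; have h2 := htri 2
  simp only [Fin.isValue, Fin.reduceAdd] at h0 h1 h2
  rw [heron_rotate]
  exact heron_pos h0 h1 h2

lemma one_sub_cosRule_sq {a b c : ℝ} (hb : b ≠ 0) (hc : c ≠ 0) :
    1 - cosRule a b c ^ 2 = heron a b c / (2 * b * c) ^ 2 := by
  unfold cosRule heron
  field_simp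
  ring

lemma abs_cosRule_lt_one {a b c : ℝ} (hb : b ≠ 0) (hc : c ≠ 0) (hQ : 0 < heron a b c) :
    |cosRule a b c| < 1 := by
  have : 0 < 1 - cosRule a b c ^ 2 := by rw [one_sub_cosRule_sq hb hc]; positivity
  exact (sq_lt_one_iff_abs_lt_one _).mp (by linarith)

lemma cos_arccos_cosRule {a b c : ℝ} (hb : b ≠ 0) (hc : c ≠ 0) (hQ : 0 < heron a b c) :
    cos (arccos (cosRule a b c)) = cosRule a b c := by
  obtain ⟨hlo, hhi⟩ := abs_lt.mp (abs_cosRule_lt_one hb hc hQ)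
  exact cos_arccos hlo.le hhi.le

lemma sqrt_one_sub_cosRule_sq {a b c : ℝ} (hb : 0 < b) (hc : 0 < c) :
    √(1 - cosRule a b c ^ 2) = √(heron a b c) / (2 * b * c) := by
  rw [one_sub_cosRule_sq hb.ne' hc.ne', sqrt_div' _ (by positivity), sqrt_sq (by positivity)]

/-- The projection formula `a = b cos γ + c cos β`. -/
lemma eq_mul_cosRule_add_mul_cosRule {a b c : ℝ} (ha : a ≠ 0) (hb : b ≠ 0) (hc : c ≠ 0) :
    a = b * cosRule c a b + c * cosRule b c a := by
  unfold cosRule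
  field_simp
  ring

section Deriv

variable {E : Type*} [NormedAddCommGroup E] [NormedSpace ℝ E] {a b c : E → ℝ}
  {a' b' c' : E →L[ℝ] ℝ} {p : E}

lemma hasFDerivAt_cosRule (ha : HasFDerivAt a a' p) (hb : HasFDerivAt b b' p)
    (hc : HasFDerivAt c c' p) (ha0 : a p ≠ 0) (hb0 : b p ≠ 0) (hc0 : c p ≠ 0) :
    HasFDerivAt (fun v ↦ cosRule (a v) (b v) (c v))
      ((a p / (b p * c p)) • (-a' + cosRule (c p) (a p) (b p) • b'
        + cosRule (b p) (c p) (a p) • c')) p := by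
  have hbc : 2 * b p * c p ≠ 0 := by positivity
  simp only [cosRule, div_eq_mul_inv]
  refine ((((hb.pow 2).add (hc.pow 2)).sub (ha.pow 2)).mul
    ((hasDerivAt_inv hbc).comp_hasFDerivAt p ((hb.const_mul 2).mul hc))).congr_fderiv ?_
  ext w
  simp only [smul_apply, add_apply, sub_apply, neg_apply, smul_eq_mul, Pi.add_apply,
    Pi.sub_apply, Pi.mul_apply, Function.comp_apply]
  field_simp
  ring

/-- `dα = (a / 2A) (da - cos γ db - cos β dc)`, with `4A = √(heron a b c)`. -/
lemma hasFDerivAt_arccos_cosRule (ha : HasFDerivAt a a' p) (hb : HasFDerivAt b b' p)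
    (hc : HasFDerivAt c c' p) (ha0 : 0 < a p) (hb0 : 0 < b p) (hc0 : 0 < c p)
    (hQ : 0 < heron (a p) (b p) (c p)) :
    HasFDerivAt (fun v ↦ arccos (cosRule (a v) (b v) (c v)))
      ((2 * a p / √(heron (a p) (b p) (c p))) • (a' - cosRule (c p) (a p) (b p) • b'
        - cosRule (b p) (c p) (a p) • c')) p := by
  obtain ⟨hlo, hhi⟩ := abs_lt.mp (abs_cosRule_lt_one hb0.ne' hc0.ne' hQ)
  refine ((hasDerivAt_arccos hlo.ne' hhi.ne).comp_hasFDerivAt p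
    (hasFDerivAt_cosRule ha hb hc ha0.ne' hb0.ne' hc0.ne')).congr_fderiv ?_
  rw [sqrt_one_sub_cosRule_sq hb0 hc0]
  have := sqrt_pos.mpr hQ
  ext w
  simp only [smul_apply, add_apply, sub_apply, neg_apply, smul_eq_mul]
  field_simp
  ring

end Deriv

lemma fderiv_const_mul_apply_mul_apply_single_mul {ι : Type*} [Fintype ι] [DecidableEq ι]
    (c : ℝ) {i j : ι} (hij : i ≠ j) (u : ι → ℝ) (s : ι) :
    fderiv ℝ (fun v : ι → ℝ ↦ c * v i * v j) u (Pi.single s 1) * u s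
      = if s = i ∨ s = j then c * u i * u j else 0 := by
  have h : HasFDerivAt (fun v : ι → ℝ ↦ c * v i * v j) _ u :=
    ((hasFDerivAt_apply (𝕜 := ℝ) i u).const_mul c).mul (hasFDerivAt_apply j u)
  rw [h.fderiv]
  simp only [add_apply, smul_apply, proj_apply, smul_eq_mul, Pi.single_apply]
  grind

lemma fderiv_edge_single_mul (d u : Fin 3 → ℝ) (q s : Fin 3) :
    fderiv ℝ (fun v : Fin 3 → ℝ ↦ d q * v (q + 1) * v (q + 2)) u (Pi.single s 1) * u s
      = if s = q then 0 else d q * u (q + 1) * u (q + 2) := by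
  have hne : ∀ q : Fin 3, q + 1 ≠ q + 2 := by decide
  have hiff : ∀ q s : Fin 3, (s = q + 1 ∨ s = q + 2) ↔ ¬s = q := by decide
  rw [fderiv_const_mul_apply_mul_apply_single_mul _ (hne q)]
  simp only [hiff, ite_not]

lemma angle_differential_along_scaling (l δ : Fin 3 → ℝ) (hl : ∀ q, l q ≠ 0) (r s : Fin 3)
    (hδ : ∀ q, δ q = if s = q then 0 else l q) :
    l r * (δ r - cosRule (l (r + 2)) (l r) (l (r + 1)) * δ (r + 1)
        - cosRule (l (r + 1)) (l (r + 2)) (l r) * δ (r + 2))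
      = -(if r = s then l r ^ 2
          else -(l r * l s * cosRule (l (-(r + s))) (l (-(r + s) + 1)) (l (-(r + s) + 2)))) := by
  have hcyc : ∀ r : Fin 3, r + 1 + 1 = r + 2 ∧ r + 1 + 2 = r ∧ r + 2 + 1 = r ∧ r + 2 + 2 = r + 1 ∧
      -(r + (r + 1)) = r + 2 ∧ -(r + (r + 2)) = r + 1 := by decide
  have hproj := eq_mul_cosRule_add_mul_cosRule (hl r) (hl (r + 1)) (hl (r + 2))
  obtain ⟨k, rfl⟩ : ∃ k, s = r + k := ⟨s - r, by abel⟩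
  fin_cases k <;>
    simp only [hδ, hcyc, Fin.zero_eta, Fin.mk_one, Fin.reduceFinMk, Fin.isValue, add_zero,
      add_eq_left, left_eq_add, add_right_inj, one_ne_zero, Fin.reduceEq, ↓reduceIte, mul_zero,
      sub_zero, zero_sub, neg_neg] <;> linear_combination l r * hproj

/-- For fixed `d > 0` and conformal factors `u > 0` with edge
lengths `x_r = d_r u_s u_t` satisfying strict triangle inequalities, the matrix
`[∂θ_r/∂u_s · u_s]` equals `-(1/(2A))·[a_rs]` where `a_rr = x_r²`,
`a_rs = -x_r x_s cos θ_t`, and `A` is the area; in particular it is symmetric. -/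
theorem conformal_angle_derivative_matrix (d u : Fin 3 → ℝ)
    (hd : ∀ r, 0 < d r) (hu : ∀ r, 0 < u r)
    (x : (Fin 3 → ℝ) → Fin 3 → ℝ)
    (hx : ∀ v r, x v r = d r * v (r + 1) * v (r + 2))
    (htri : ∀ r : Fin 3, x u (r + 1) + x u (r + 2) > x u r)
    (θ : Fin 3 → (Fin 3 → ℝ) → ℝ)
    (hθ : ∀ r v, θ r v = Real.arccos
      ((x v (r + 1) ^ 2 + x v (r + 2) ^ 2 - x v r ^ 2)
        / (2 * x v (r + 1) * x v (r + 2))))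
    (A : ℝ)
    (hA : A = (1 / 4) * Real.sqrt ((x u 0 + x u 1 + x u 2) *
      (-x u 0 + x u 1 + x u 2) * (x u 0 - x u 1 + x u 2) * (x u 0 + x u 1 - x u 2)))
    (a : Matrix (Fin 3) (Fin 3) ℝ)
    (ha : ∀ r s, a r s = if r = s then x u r ^ 2
      else -(x u r * x u s * Real.cos (θ (-(r + s)) u))) :
    (∀ r s, fderiv ℝ (θ r) u (Pi.single s 1) * u s = -(1 / (2 * A)) * a r s) ∧
    (∀ r s, fderiv ℝ (θ r) u (Pi.single s 1) * u s
      = fderiv ℝ (θ s) u (Pi.single r 1) * u r) := by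
  have hxpos : ∀ q, 0 < x u q := fun q ↦ by
    rw [hx]; exact mul_pos (mul_pos (hd q) (hu _)) (hu _)
  have hQ := heron_rotate_pos (x u) htri
  have hinvA : ∀ r, 1 / (2 * A) = 2 / √(heron (x u r) (x u (r + 1)) (x u (r + 2))) := fun r ↦ by
    rw [hA, heron_rotate]; unfold heron; ring
  have hcos : ∀ t, cos (θ t u) = cosRule (x u t) (x u (t + 1)) (x u (t + 2)) := fun t ↦ by
    rw [hθ]; exact cos_arccos_cosRule (hxpos _).ne' (hxpos _).ne' (hQ t)
  have hdiff : ∀ q, HasFDerivAt (fun v ↦ x v q) (fderiv ℝ (fun v ↦ x v q) u) u := fun q ↦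
    DifferentiableAt.hasFDerivAt (by simp only [hx]; fun_prop)
  have hscale : ∀ q s,
      fderiv ℝ (fun v ↦ x v q) u (Pi.single s 1) * u s = if s = q then 0 else x u q := by
    intro q s; simp only [hx]; exact fderiv_edge_single_mul d u q s
  have key : ∀ r s, fderiv ℝ (θ r) u (Pi.single s 1) * u s = -(1 / (2 * A)) * a r s := by
    intro r s
    have hθr : θ r = fun v ↦ arccos (cosRule (x v r) (x v (r + 1)) (x v (r + 2))) := funext (hθ r)
    have hderiv := hasFDerivAt_arccos_cosRule (hdiff r) (hdiff (r + 1)) (hdiff (r + 2))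
      (hxpos _) (hxpos _) (hxpos _) (hQ r)
    have h := angle_differential_along_scaling (x u) _ (fun q ↦ (hxpos q).ne') r s
      (fun q ↦ hscale q s)
    rw [hθr, hderiv.fderiv, ha, hcos, hinvA r]
    simp only [smul_apply, sub_apply, smul_eq_mul]
    linear_combination (2 / √(heron (x u r) (x u (r + 1)) (x u (r + 2)))) * h
  have hsymm : ∀ r s, a r s = a s r := by
    intro r s
    rw [ha, ha, add_comm s r]
    by_cases h : r = s
    · subst h; rfl
    · rw [if_neg h, if_neg (Ne.symm h), mul_comm (x u s)]
  exact ⟨key, fun r s ↦ by rw [key, key, hsymm]⟩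
end

section
/- Let w⁽ⁿ⁾ be a sequence in the surface {(w_i,w_j,w_k) ∈ ℝ³ : e^{-w_i} + e^{-w_j} + e^{-w_k} = 1} satisfying the triangle constraints d_i e^{-w_i} + d_r e^{-w_r} > d_s e^{-w_s} for {r,s} = {j,k} (with fixed d_i,d_j,d_k > 0), such that w_i⁽ⁿ⁾ - w_j⁽ⁿ⁾ → ∞. Then w_i⁽ⁿ⁾ → ∞ while w_j⁽ⁿ⁾ and w_k⁽ⁿ⁾ are bounded above, and all coordinates are nonnegative. -/
/-! Each `e^{-w_r}` is below `1`, so `w_r ≥ 0`; hence `w₀ ≥ w₀ - w₁ → ∞` and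
`e^{-w₀} → 0`. Once one side of the triangle degenerates, the triangle inequalities
together with `∑ e^{-w_r} = 1` keep the other two sides `e^{-w₁}`, `e^{-w₂}` away from `0`. -/

open Filter Real Topology

lemma le_neg_log_of_le_exp_neg {x ε : ℝ} (hε : 0 < ε) (h : ε ≤ exp (-x)) :
    x ≤ -log ε := by
  linarith [(log_le_iff_le_exp hε).mpr h]

lemma exists_pos_eventually_le_of_triangle_of_tendsto_zero {ι : Type*} {l : Filter ι}
    {d₀ d₁ d₂ : ℝ} (hd₁ : 0 < d₁) (hd₂ : 0 < d₂) {a b c : ι → ℝ}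
    (hsum : ∀ i, a i + b i + c i = 1)
    (hc : ∀ i, d₂ * c i < d₀ * a i + d₁ * b i)
    (hb : ∀ i, d₁ * b i < d₀ * a i + d₂ * c i)
    (ha : Tendsto a l (𝓝 0)) :
    ∃ ε > 0, ∀ᶠ i in l, ε ≤ b i ∧ ε ≤ c i := by
  -- substituting `c = 1 - a - b` into `hc`: `(d₁ + d₂) b > d₂ - (d₀ + d₂) a → d₂`
  have hlim₁ : Tendsto (fun i => d₂ - (d₀ + d₂) * a i) l (𝓝 d₂) := by
    simpa using tendsto_const_nhds.sub (ha.const_mul (d₀ + d₂))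
  set β := d₂ / (2 * (d₁ + d₂)) with hβ
  have hβpos : 0 < β := by positivity
  have hb_ge : ∀ᶠ i in l, β ≤ b i := by
    filter_upwards [hlim₁.eventually_const_lt (half_lt_self hd₂)] with i hi
    rw [hβ, div_le_iff₀ (by positivity)]
    nlinarith [hc i, hsum i]
  have hlim₂ : Tendsto (fun i => d₁ * β - d₀ * a i) l (𝓝 (d₁ * β)) := by
    simpa using tendsto_const_nhds.sub (ha.const_mul d₀)
  -- then `d₂ c > d₁ b - d₀ a ≥ d₁ β - d₀ a → d₁ β`
  refine ⟨min β (d₁ * β / 2 / d₂), lt_min hβpos (by positivity), ?_⟩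
  filter_upwards [hb_ge, hlim₂.eventually_const_lt (half_lt_self (by positivity))]
    with i hbi hi
  refine ⟨(min_le_left _ _).trans hbi, (min_le_right _ _).trans ?_⟩
  rw [div_le_iff₀ hd₂]
  nlinarith [hb i]

/-- For a sequence `w⁽ⁿ⁾` in the surface
`{e^{-w_i} + e^{-w_j} + e^{-w_k} = 1}` satisfying the triangle constraints
`d_i e^{-w_i} + d_r e^{-w_r} > d_s e^{-w_s}` for `{r,s} = {j,k}`, with
`w_i⁽ⁿ⁾ - w_j⁽ⁿ⁾ → ∞`, one has `w_i⁽ⁿ⁾ → ∞`, `w_j⁽ⁿ⁾` and `w_k⁽ⁿ⁾` bounded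
above, and all coordinates nonnegative. -/
theorem degenerating_sequence_behavior (d : Fin 3 → ℝ) (hd : ∀ r, 0 < d r)
    (w : ℕ → Fin 3 → ℝ)
    (hsurf : ∀ n, Real.exp (-(w n 0)) + Real.exp (-(w n 1))
      + Real.exp (-(w n 2)) = 1)
    (htri1 : ∀ n, d 0 * Real.exp (-(w n 0)) + d 1 * Real.exp (-(w n 1))
      > d 2 * Real.exp (-(w n 2)))
    (htri2 : ∀ n, d 0 * Real.exp (-(w n 0)) + d 2 * Real.exp (-(w n 2))
      > d 1 * Real.exp (-(w n 1)))
    (hdiff : Tendsto (fun n => w n 0 - w n 1) atTop atTop) :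
    Tendsto (fun n => w n 0) atTop atTop ∧
    (∃ M : ℝ, ∀ n, w n 1 ≤ M ∧ w n 2 ≤ M) ∧
    (∀ n r, 0 ≤ w n r) := by
  have hnonneg : ∀ n r, 0 ≤ w n r := by
    intro n r
    have hle : exp (-w n r) ≤ 1 := by
      fin_cases r <;> dsimp only [Fin.reduceFinMk, Fin.isValue] <;>
        linarith [hsurf n, exp_pos (-w n 0), exp_pos (-w n 1), exp_pos (-w n 2)]
    exact neg_nonpos.mp (exp_le_one_iff.mp hle)
  have hw₀ : Tendsto (fun n => w n 0) atTop atTop :=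
    tendsto_atTop_mono (fun n => by linarith [hnonneg n 1]) hdiff
  obtain ⟨ε, hε, hev⟩ := exists_pos_eventually_le_of_triangle_of_tendsto_zero (hd 1) (hd 2)
    hsurf htri1 htri2 (tendsto_exp_neg_atTop_nhds_zero.comp hw₀)
  have hev_le : ∀ᶠ n in atTop, max (w n 1) (w n 2) ≤ -log ε := hev.mono fun n hn =>
    max_le (le_neg_log_of_le_exp_neg hε hn.1) (le_neg_log_of_le_exp_neg hε hn.2)
  obtain ⟨M, hM⟩ := (isBoundedUnder_of_eventually_le hev_le).bddAbove_range
  exact ⟨hw₀, ⟨M, fun n => max_le_iff.mp (hM (Set.mem_range_self n))⟩, hnonneg⟩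
end
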